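/- For finite random variables X and Y and any function q(y|x) that is a conditional probability distribution (q(·|x) sums to 1 for each x), the mutual information satisfies I(X;Y) ≥ E_{p(x,y)}[ log( q(y|x) / p(y) ) ] (Barber–Agakov variational lower bound). -/

import Mathlib

/-! Subtracting the bound leaves `∑ p log (p / (p_X q))`, the divergence of the joint law from
`p_X(x) q(y|x)`. Both have the same total mass, so Gibbs' inequality in the pointwise form
`a - b ≤ a log (a / b)` makes it nonnegative. -/

open Finset Real

theorem sub_le_mul_log_div {a b : ℝ} (ha : 0 ≤ a) (hb : 0 ≤ b) (hab : 0 < a → 0 < b) :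
    a - b ≤ a * log (a / b) := by
  rcases ha.eq_or_lt with rfl | ha
  · simpa using hb
  have hb := hab ha
  have h := one_sub_inv_le_log_of_pos (div_pos ha hb)
  rw [inv_div] at h
  calc a - b = a * (1 - b / a) := by field_simp
    _ ≤ a * log (a / b) := mul_le_mul_of_nonneg_left h ha.le

theorem sum_mul_log_div_nonneg {ι : Type*} [Fintype ι] {p r : ι → ℝ} (hp : ∀ i, 0 ≤ p i)
    (hr : ∀ i, 0 ≤ r i) (hpr : ∀ i, 0 < p i → 0 < r i) (hsum : ∑ i, r i ≤ ∑ i, p i) :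
    0 ≤ ∑ i, p i * log (p i / r i) :=
  calc 0 ≤ ∑ i, (p i - r i) := by rw [sum_sub_distrib]; linarith
    _ ≤ ∑ i, p i * log (p i / r i) :=
      sum_le_sum fun i _ => sub_le_mul_log_div (hp i) (hr i) (hpr i)

theorem log_div_mul_sub_log_div {a b c d : ℝ} (ha : a ≠ 0) (hb : b ≠ 0) (hc : c ≠ 0)
    (hd : d ≠ 0) : log (a / (b * c)) - log (d / c) = log (a / (b * d)) := by
  rw [← log_div (by positivity) (by positivity)]
  congr 1
  field_simp

theorem barber_agakov_general {X Y : Type*} [Fintype X] [Fintype Y]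
    (p : X → Y → ℝ) (hp : ∀ x y, 0 ≤ p x y)
    (pX : X → ℝ) (hpX : ∀ x, pX x = ∑ y : Y, p x y)
    (pY : Y → ℝ) (hpY : ∀ y, pY y = ∑ x : X, p x y)
    (q : X → Y → ℝ) (hq0 : ∀ x y, 0 ≤ q x y) (hq1 : ∀ x, ∑ y : Y, q x y = 1)
    (hqpos : ∀ x y, 0 < p x y → 0 < q x y) :
    (∑ x : X, ∑ y : Y, p x y * Real.log (p x y / (pX x * pY y)))
      ≥ ∑ x : X, ∑ y : Y, p x y * Real.log (q x y / pY y) := by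
  have hpX0 (x : X) : 0 ≤ pX x := hpX x ▸ sum_nonneg fun y _ => hp x y
  have hpXpos {x y} (h : 0 < p x y) : 0 < pX x :=
    hpX x ▸ sum_pos' (fun y _ => hp x y) ⟨y, mem_univ y, h⟩
  have hpYpos {x y} (h : 0 < p x y) : 0 < pY y :=
    hpY y ▸ sum_pos' (fun x _ => hp x y) ⟨x, mem_univ x, h⟩
  have gap (x : X) (y : Y) : p x y * log (p x y / (pX x * pY y)) - p x y * log (q x y / pY y)
      = p x y * log (p x y / (pX x * q x y)) := by
    rcases (hp x y).eq_or_lt with h | h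
    · simp [← h]
    rw [← mul_sub, log_div_mul_sub_log_div h.ne' (hpXpos h).ne' (hpYpos h).ne' (hqpos x y h).ne']
  have mass : ∑ x, ∑ y, pX x * q x y = ∑ x, ∑ y, p x y := by
    simp only [← mul_sum, hq1, mul_one, hpX]
  rw [ge_iff_le, ← sub_nonneg, ← sum_sub_distrib]
  simp only [← sum_sub_distrib, gap, ← Fintype.sum_prod_type']
  refine sum_mul_log_div_nonneg (fun z => hp z.1 z.2)
    (fun z => mul_nonneg (hpX0 z.1) (hq0 z.1 z.2))
    (fun z h => mul_pos (hpXpos h) (hqpos z.1 z.2 h)) ?_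
  rw [Fintype.sum_prod_type, Fintype.sum_prod_type]
  exact mass.le

/-- Barber–Agakov variational lower bound. For finite random variables X, Y with
joint pmf p and any conditional distribution q(y|x),
I(X;Y) ≥ E_{p(x,y)}[ log( q(y|x) / p(y) ) ]. -/
theorem barber_agakov {X Y : Type*} [Fintype X] [Fintype Y]
    (p : X → Y → ℝ) (hp : ∀ x y, 0 ≤ p x y) (hp1 : ∑ x : X, ∑ y : Y, p x y = 1)
    (pX : X → ℝ) (hpX : ∀ x, pX x = ∑ y : Y, p x y)
    (pY : Y → ℝ) (hpY : ∀ y, pY y = ∑ x : X, p x y)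
    (q : X → Y → ℝ) (hq0 : ∀ x y, 0 ≤ q x y) (hq1 : ∀ x, ∑ y : Y, q x y = 1)
    (hqpos : ∀ x y, 0 < p x y → 0 < q x y) :
    (∑ x : X, ∑ y : Y, p x y * Real.log (p x y / (pX x * pY y)))
      ≥ ∑ x : X, ∑ y : Y, p x y * Real.log (q x y / pY y) :=
  barber_agakov_general p hp pX hpX pY hpY q hq0 hq1 hqpos
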